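/- For every k ∈ ℕ, the set I_k = {i ∈ ℤ : −F_{2k} ≤ i < F_{2k+1}} coincides with the set of integers whose canonical Fibonacci representation has length at most 2k+1. Moreover the minimal value −F_{2k} is attained by the word 1(00)^k and the maximal value F_{2k+1} − 1 is attained by the word 0(10)^k. -/

import Mathlib

/-- Fibonacci sequence with `F 0 = 1`, `F 1 = 1`, `F 2 = 2`. -/
def F : ℕ → ℤ
  | 0 => 1
  | 1 => 1
  | (n+2) => F (n+1) + F n

/-- Numerical value of a binary digit. -/
def bv (x : Bool) : ℤ := if x then 1 else 0

/-- Value of an odd-length binary word `w = w_{2k+1} ⋯ w_1` (most significant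
digit first): `val_F(w) = Σ_{i=1}^{2k} w_i F_i − w_{2k+1} F_{2k}`. -/
def valF (w : List Bool) : ℤ :=
  (∑ i ∈ Finset.range (w.length - 1), bv (w.reverse.getD i false) * F (i+1))
    - bv (w.reverse.getD (w.length - 1) false) * F (w.length - 1)

/-- The word has no factor `11`. -/
def no11 (w : List Bool) : Prop :=
  List.Chain' (fun x y => ¬(x = true ∧ y = true)) w

/-- Words of the canonical representation language: odd length, no factor 11,
not beginning with 000 nor with 101. -/
def IsRep (w : List Bool) : Prop :=
  Odd w.length ∧ no11 w ∧
    ¬ ([false, false, false] <+: w) ∧ ¬ ([true, false, true] <+: w)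

/-- `Ik k = {i ∈ ℤ : −F_{2k} ≤ i < F_{2k+1}}`. -/
def Ik (k : ℕ) : Set ℤ := {i : ℤ | -F (2*k) ≤ i ∧ i < F (2*k+1)}

/-- Shifted version of `Ik` incorporating `I_{−1} = ∅`. -/
def Iext : ℕ → Set ℤ
  | 0 => ∅
  | (k+1) => Ik k

/-- The morphism `h : 0 ↦ 00, 1 ↦ 01, 2 ↦ 10` on single letters. -/
def h3 : Fin 3 → List Bool
  | 0 => [false, false]
  | 1 => [false, true]
  | 2 => [true, false]

/-! Dropping the sign digit, a word `a :: u` has value `fibVal u - a F_{|u|}`, where `fibVal u`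
is the ordinary Zeckendorf value of `u` with weights `F_{|u|}, …, F_1`. For words without
factor `11` that value lies in `[0, F_{|u|+1})`, so every canonical word of length at most
`2k+1` has its value in `I_k`. Conversely, a canonical word of length at least `2k+3` starts
either with `100`, giving a value below `-F_{2k}`, or with `0` followed by a `1` among the next
two digits, giving a value at least `F_{2k+1}`. -/

lemma F_add_two (n : ℕ) : F (n + 2) = F (n + 1) + F n := rfl

lemma F_pos : ∀ n, 0 < F n
  | 0 | 1 => by decide
  | n + 2 => by rw [F_add_two]; have := F_pos n; have := F_pos (n + 1); omega

lemma F_mono : Monotone F := by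
  refine monotone_nat_of_le_succ fun n => ?_
  cases n with
  | zero => decide
  | succ n => rw [F_add_two]; have := F_pos n; omega

@[simp] lemma bv_true : bv true = 1 := rfl

@[simp] lemma bv_false : bv false = 0 := rfl

lemma bv_nonneg (x : Bool) : 0 ≤ bv x := by cases x <;> decide

lemma bv_le_one (x : Bool) : bv x ≤ 1 := by cases x <;> decide

def fibVal : List Bool → ℤ
  | [] => 0
  | a :: u => bv a * F (u.length + 1) + fibVal u

lemma getD_reverse_cons_of_lt (a : Bool) (u : List Bool) {i : ℕ} (hi : i < u.length) :
    (a :: u).reverse.getD i false = u.reverse.getD i false := by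
  rw [List.reverse_cons, List.getD_append _ _ _ _ (by simpa using hi)]

lemma getD_reverse_cons_length (a : Bool) (u : List Bool) :
    (a :: u).reverse.getD u.length false = a := by
  simp [List.reverse_cons, List.getD_eq_getElem?_getD]

lemma sum_getD_reverse_cons (a : Bool) (u : List Bool) :
    ∑ i ∈ Finset.range u.length, bv ((a :: u).reverse.getD i false) * F (i + 1)
      = ∑ i ∈ Finset.range u.length, bv (u.reverse.getD i false) * F (i + 1) :=
  Finset.sum_congr rfl fun i hi => by
    rw [getD_reverse_cons_of_lt a u (Finset.mem_range.mp hi)]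

lemma fibVal_eq_sum (u : List Bool) :
    fibVal u = ∑ i ∈ Finset.range u.length, bv (u.reverse.getD i false) * F (i + 1) := by
  induction u with
  | nil => rfl
  | cons a u ih =>
    rw [fibVal, ih, List.length_cons, Finset.sum_range_succ, sum_getD_reverse_cons,
      getD_reverse_cons_length, add_comm]

lemma valF_cons (a : Bool) (u : List Bool) :
    valF (a :: u) = fibVal u - bv a * F u.length := by
  rw [valF, fibVal_eq_sum, List.length_cons, Nat.add_sub_cancel, sum_getD_reverse_cons,
    getD_reverse_cons_length]

lemma fibVal_nonneg : ∀ u : List Bool, 0 ≤ fibVal u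
  | [] => le_rfl
  | a :: u => add_nonneg (mul_nonneg (bv_nonneg a) (F_pos _).le) (fibVal_nonneg u)

lemma fibVal_lt : ∀ u : List Bool, no11 u → fibVal u < F (u.length + 1)
  | [] => fun _ => by decide
  | [true] => fun _ => by decide
  | false :: u => fun h => by
    have := fibVal_lt u h.tail
    have := F_pos u.length
    simp only [fibVal, bv_false, zero_mul, zero_add, List.length_cons, F_add_two]
    omega
  | true :: false :: v => fun h => by
    -- `F_{|v|+2} + fibVal v < F_{|v|+2} + F_{|v|+1} = F_{|v|+3}`
    have := fibVal_lt v h.tail.tail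
    simp only [fibVal, bv_true, bv_false, one_mul, zero_mul, zero_add, List.length_cons,
      F_add_two]
    omega
  | true :: true :: _ => fun h => absurd (List.isChain_cons_cons.mp h).1 (by decide)

lemma valF_cons_mem_Ico_of_no11 (a : Bool) (u : List Bool) (h : no11 (a :: u)) :
    valF (a :: u) ∈ Set.Ico (-F u.length) (F (u.length + 1)) := by
  have := fibVal_nonneg u
  have := fibVal_lt u h.tail
  have := mul_le_mul_of_nonneg_right (bv_le_one a) (F_pos u.length).le
  have := mul_nonneg (bv_nonneg a) (F_pos u.length).le
  rw [valF_cons]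
  constructor <;> linarith

lemma valF_lt_or_le_of_isRep (a b c : Bool) (v : List Bool) (h : IsRep (a :: b :: c :: v)) :
    valF (a :: b :: c :: v) < -F v.length ∨ F (v.length + 1) ≤ valF (a :: b :: c :: v) := by
  obtain ⟨-, hno11, h000, h101⟩ := h
  have hv := fibVal_lt v hno11.tail.tail.tail
  have := fibVal_nonneg v
  have := F_pos (v.length + 1 + 1)
  simp only [valF_cons, fibVal, List.length_cons] at hv ⊢
  cases a
  · have hbc : b = true ∨ c = true := by
      by_contra!
      simp_all
    right
    rcases hbc with rfl | rfl
    · have := mul_nonneg (bv_nonneg c) (F_pos (v.length + 1)).le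
      have := F_mono (show v.length + 1 ≤ v.length + 1 + 1 by omega)
      simp only [bv_true, bv_false, one_mul, zero_mul]
      linarith
    · have := mul_nonneg (bv_nonneg b) (F_pos (v.length + 1 + 1)).le
      simp only [bv_true, bv_false, one_mul, zero_mul]
      linarith
  · obtain rfl : b = false := by simpa using (List.isChain_cons_cons.mp hno11).1
    obtain rfl : c = false := by simpa using h101
    left
    simp only [bv_true, bv_false, one_mul, zero_mul, F_add_two]
    linarith

lemma valF_mem_Ik_of_length_le {w : List Bool} (h : IsRep w) {k : ℕ}
    (hw : w.length ≤ 2 * k + 1) : valF w ∈ Ik k := by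
  obtain _ | ⟨a, u⟩ := w
  · exact absurd h.1 (by decide)
  · have hu : u.length ≤ 2 * k := by simpa using hw
    obtain ⟨hlo, hhi⟩ := valF_cons_mem_Ico_of_no11 a u h.2.1
    have := F_mono hu
    have := F_mono (show u.length + 1 ≤ 2 * k + 1 by omega)
    exact ⟨by omega, by omega⟩

lemma length_le_of_valF_mem_Ik {w : List Bool} (h : IsRep w) {k : ℕ}
    (hw : valF w ∈ Ik k) : w.length ≤ 2 * k + 1 := by
  obtain ⟨hlo, hhi⟩ := hw
  match w, h with
  | [], h | [_, _], h => exact absurd h.1 (by simp)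
  | [_], _ => simp
  | a :: b :: c :: v, h =>
    by_contra! hlong
    have hodd : Odd (v.length + 3) := by simpa using h.1
    have hv : 2 * k ≤ v.length := by simp only [List.length_cons] at hlong; grind
    have := F_mono hv
    have := F_mono (show 2 * k + 1 ≤ v.length + 1 by omega)
    rcases valF_lt_or_le_of_isRep a b c v h with hlt | hge <;> omega

lemma fibVal_replicate_false (n : ℕ) : fibVal (List.replicate n false) = 0 := by
  induction n with
  | zero => rfl
  | succ n ih => simp [List.replicate_succ, fibVal, ih]

lemma length_flatten_replicate_true_false (k : ℕ) :
    (List.replicate k [true, false]).flatten.length = 2 * k := by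
  simp [mul_comm]

lemma fibVal_flatten_replicate_true_false (k : ℕ) :
    fibVal (List.replicate k [true, false]).flatten = F (2 * k + 1) - 1 := by
  induction k with
  | zero => rfl
  | succ k ih =>
    rw [List.replicate_succ, List.flatten_cons, List.cons_append, List.cons_append,
      List.nil_append, fibVal, fibVal, ih, List.length_cons,
      length_flatten_replicate_true_false, show 2 * (k + 1) + 1 = 2 * k + 1 + 2 by ring,
      F_add_two]
    simp only [bv_true, bv_false, one_mul, zero_mul, F_add_two]
    ring

/-- `I_k` is the set of integers whose canonical representation has length at
most `2k+1`; the minimal value `−F_{2k}` is attained by the word `1(00)^k` and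
the maximal value `F_{2k+1} − 1` by the word `0(10)^k`. -/
theorem Ik_eq_short_reps (repF : ℤ → List Bool)
    (hrep : ∀ n : ℤ, IsRep (repF n) ∧ valF (repF n) = n) (k : ℕ) :
    Ik k = {n : ℤ | (repF n).length ≤ 2*k+1}
      ∧ valF (true :: List.replicate (2*k) false) = -F (2*k)
      ∧ valF (false :: (List.replicate k [true, false]).flatten) = F (2*k+1) - 1 := by
  refine ⟨?_, ?_, ?_⟩
  · ext n
    obtain ⟨hrepn, hval⟩ := hrep n
    exact ⟨fun hn => length_le_of_valF_mem_Ik hrepn (hval.symm ▸ hn),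
      fun hn => hval ▸ valF_mem_Ik_of_length_le hrepn hn⟩
  · simp [valF_cons, fibVal_replicate_false]
  · simp [valF_cons, fibVal_flatten_replicate_true_false]
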